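/- arXiv:2601.17521 — 8 statements merged into one kernel-verified Lean document; each statement's English description precedes it below -/
import Mathlib

section
/- Let A be a finite nonempty alphabet and let Z be a set of positions over A. Player 1 has a winning strategy for Z if and only if there exists n ∈ ℕ such that Player 1 has a winning strategy for the truncated set Z_n = {p ∈ Z : len(p) ≤ n}. -/
open scoped ENNReal

variable {A : Type*}

/-- A position `p` is a prefix of the play `x`. -/
def PrefixOfPlay (p : List A) (x : ℕ → A) : Prop :=
  List.ofFn (fun i : Fin p.length => x i) = p

/-- The play `x` is consistent with the Player 1 strategy `s₁`. -/
def Consistent1 (s₁ : List A → A) (x : ℕ → A) : Prop :=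
  ∀ n : ℕ, x (2 * n) = s₁ (List.ofFn (fun i : Fin (2 * n) => x i))

/-- The play `x` is consistent with the Player 2 strategy `s₂`. -/
def Consistent2 (s₂ : List A → A) (x : ℕ → A) : Prop :=
  ∀ n : ℕ, x (2 * n + 1) = s₂ (List.ofFn (fun i : Fin (2 * n + 1) => x i))

/-- Player 1 has a winning strategy for the open set determined by `Z`. -/
def P1Wins (Z : Set (List A)) : Prop :=
  ∃ s₁ : List A → A, ∀ x : ℕ → A, Consistent1 s₁ x → ∃ p ∈ Z, PrefixOfPlay p x

/-- Player 2 has a winning strategy for the open set determined by `Z`. -/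
def P2Wins (Z : Set (List A)) : Prop :=
  ∃ s₂ : List A → A, ∀ x : ℕ → A, Consistent2 s₂ x → ¬ ∃ p ∈ Z, PrefixOfPlay p x

/-- Player 1 has a winning strategy for `Z` iff she has one for some
length-truncation `{p ∈ Z | len(p) ≤ n}` of `Z`. -/
theorem player1_wins_iff_wins_truncation [Fintype A] [Nonempty A] (Z : Set (List A)) :
    P1Wins Z ↔ ∃ n : ℕ, P1Wins {p ∈ Z | p.length ≤ n} := by
  constructor
  · rintro ⟨s₁, hs⟩
    by_contra hcon
    push_neg at hcon
    -- for each n, strategy s₁ fails to win the n-truncation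
    have hx : ∀ n : ℕ, ∃ x : ℕ → A, Consistent1 s₁ x ∧
        ¬ ∃ p ∈ {p ∈ Z | p.length ≤ n}, PrefixOfPlay p x := by
      intro n
      have := hcon n
      rw [P1Wins] at this
      push_neg at this
      obtain ⟨x, hx1, hx2⟩ := this s₁
      exact ⟨x, hx1, by push_neg; exact hx2⟩
    choose xs hxs1 hxs2 using hx
    -- pick an ultrafilter extending atTop on ℕ
    let U : Ultrafilter ℕ := Ultrafilter.of Filter.atTop
    have hU : (U : Filter ℕ) ≤ Filter.atTop := Ultrafilter.of_le _
    -- define the limit play y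
    have hA : ∀ i : ℕ, ∃ a : A, {n | xs n i = a} ∈ U := by
      intro i
      obtain ⟨a, ha⟩ := (Ultrafilter.map (fun n => xs n i) U).eq_pure_of_finite
      refine ⟨a, ?_⟩
      have : {a} ∈ Ultrafilter.map (fun n => xs n i) U := by
        rw [ha]; exact Filter.mem_pure.2 rfl
      simpa [Ultrafilter.mem_map, Set.preimage] using this
    choose y hy using hA
    -- agreement up to m on a large set
    have hagree : ∀ m : ℕ, {n | ∀ i < m, xs n i = y i} ∈ U := by
      intro m
      induction m with
      | zero =>
        have h0 : {n : ℕ | ∀ i < 0, xs n i = y i} = Set.univ := by ext; simp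
        rw [h0]; exact Filter.univ_mem
      | succ m ih =>
        have := Filter.inter_mem ih (hy m)
        refine Filter.mem_of_superset this ?_
        rintro n ⟨h1, h2⟩ i hi
        rcases Nat.lt_succ_iff_lt_or_eq.1 hi with h | h
        · exact h1 i h
        · subst h; exact h2
    -- y is consistent with s₁
    have hycons : Consistent1 s₁ y := by
      intro k
      obtain ⟨n, hn⟩ := Ultrafilter.nonempty_of_mem (hagree (2 * k + 1))
      have h1 : xs n (2 * k) = y (2 * k) := hn (2 * k) (by omega)
      have h2 : List.ofFn (fun i : Fin (2 * k) => xs n i) =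
          List.ofFn (fun i : Fin (2 * k) => y i) := by
        congr 1; funext i; exact hn i (by omega)
      rw [← h1, hxs1 n k, h2]
    obtain ⟨p, hpZ, hpre⟩ := hs y hycons
    -- find a large n where xs n agrees with y up to p.length and n ≥ p.length
    have hbig : {n | ∀ i < p.length, xs n i = y i} ∩ Set.Ici p.length ∈ U :=
      Filter.inter_mem (hagree p.length) (hU (Filter.Ici_mem_atTop _))
    obtain ⟨n, hn1, hn2⟩ := Ultrafilter.nonempty_of_mem hbig
    refine hxs2 n ⟨p, ⟨hpZ, hn2⟩, ?_⟩
    have heq : List.ofFn (fun i : Fin p.length => xs n i) =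
        List.ofFn (fun i : Fin p.length => y i) := by
      congr 1; funext i; exact hn1 i i.isLt
    rw [PrefixOfPlay, heq]; exact hpre
  · rintro ⟨n, s₁, hs⟩
    exact ⟨s₁, fun x hx => by
      obtain ⟨p, hp, hpre⟩ := hs x hx
      exact ⟨p, hp.1, hpre⟩⟩
end

section
/- Let A be a finite nonempty alphabet and let Z be a set of positions over A. If Player 1 has a winning strategy for Z, then ∑'_{p ∈ Z} (1/|A|)^{⌊len(p)/2⌋} ≥ 1 (the sum taken in the extended nonnegative reals). -/
open scoped ENNReal

variable {A : Type*}

/-- History of the first `n` moves when Player 1 follows `s₁` and Player 2's moves are `y`. -/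
def GameHist (s₁ : List A → A) (y : ℕ → A) : ℕ → List A
  | 0 => []
  | n + 1 => GameHist s₁ y n ++ [if n % 2 = 0 then s₁ (GameHist s₁ y n) else y (n / 2)]

/-- The play when Player 1 follows `s₁` and Player 2's moves are `y`. -/
def GamePlay (s₁ : List A → A) (y : ℕ → A) (n : ℕ) : A :=
  if n % 2 = 0 then s₁ (GameHist s₁ y n) else y (n / 2)

lemma gameHist_succ (s₁ : List A → A) (y : ℕ → A) (n : ℕ) :
    GameHist s₁ y (n + 1) = GameHist s₁ y n ++ [GamePlay s₁ y n] := rfl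

lemma gameHist_eq_ofFn (s₁ : List A → A) (y : ℕ → A) (n : ℕ) :
    GameHist s₁ y n = List.ofFn (fun i : Fin n => GamePlay s₁ y i) := by
  induction n with
  | zero => rfl
  | succ n ih =>
    rw [List.ofFn_succ', gameHist_succ, ih]
    simp [List.concat_eq_append]

lemma consistent1_gamePlay (s₁ : List A → A) (y : ℕ → A) :
    Consistent1 s₁ (GamePlay s₁ y) := by
  intro n
  rw [show GamePlay s₁ y (2 * n) = s₁ (GameHist s₁ y (2 * n)) by
    rw [GamePlay, if_pos (by omega)], gameHist_eq_ofFn]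

lemma gamePlay_odd (s₁ : List A → A) (y : ℕ → A) (i : ℕ) :
    GamePlay s₁ y (2 * i + 1) = y i := by
  rw [GamePlay, if_neg (by omega)]
  congr 1
  omega

lemma gameHist_congr (s₁ : List A → A) {y y' : ℕ → A} {n : ℕ}
    (h : ∀ i, 2 * i + 1 < n → y i = y' i) : GameHist s₁ y n = GameHist s₁ y' n := by
  induction n with
  | zero => rfl
  | succ n ih =>
    have ih' := ih (fun i hi => h i (by omega))
    rw [GameHist, GameHist, ih']
    congr 2
    by_cases hn : n % 2 = 0
    · simp [hn]
    · simp only [hn, if_false]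
      exact h (n / 2) (by omega)

lemma prefix_iff_gameHist (s₁ : List A → A) (y : ℕ → A) (p : List A) :
    PrefixOfPlay p (GamePlay s₁ y) ↔ GameHist s₁ y p.length = p := by
  rw [PrefixOfPlay, gameHist_eq_ofFn]

lemma gameHist_entry (s₁ : List A → A) (y : ℕ → A) {n : ℕ} {p : List A}
    (h : GameHist s₁ y n = p) {i : ℕ} (hi : 2 * i + 1 < p.length) :
    p[2 * i + 1]'hi = y i := by
  subst h
  have h2 : 2 * i + 1 < (List.ofFn fun j : Fin n => GamePlay s₁ y j).length := by
    rw [← gameHist_eq_ofFn]; exact hi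
  have h3 : (GameHist s₁ y n)[2 * i + 1]'hi
      = (List.ofFn fun j : Fin n => GamePlay s₁ y j)[2 * i + 1]'h2 := by
    congr 1
    exact gameHist_eq_ofFn s₁ y n
  rw [h3, List.getElem_ofFn]
  exact gamePlay_odd s₁ y i

/-- If Player 1 has a winning strategy for `Z`, then
`∑'_{p ∈ Z} (1/|A|)^⌊len(p)/2⌋ ≥ 1`. -/
theorem player1_wins_imp_sum_ge_one [Fintype A] [Nonempty A] (Z : Set (List A))
    (h : P1Wins Z) :
    1 ≤ ∑' p : Z, ((1 : ℝ≥0∞) / Fintype.card A) ^ (p.1.length / 2) := by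
  classical
  obtain ⟨s₁, hs⟩ := h
  obtain ⟨a₀⟩ := ‹Nonempty A›
  letI : TopologicalSpace A := ⊥
  haveI : DiscreteTopology A := ⟨rfl⟩
  -- the open cover of Player-2-move-space
  set U : Z → Set (ℕ → A) := fun p => {y | GameHist s₁ y p.1.length = p.1} with hU
  have hUopen : ∀ p : Z, IsOpen (U p) := by
    intro p
    have hres : Continuous (fun (y : ℕ → A) (i : Fin p.1.length) => y i) :=
      continuous_pi fun i => continuous_apply _
    have : U p = (fun (y : ℕ → A) (i : Fin p.1.length) => y i) ⁻¹'
        {yb : Fin p.1.length → A |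
          GameHist s₁ (fun j => if h : j < p.1.length then yb ⟨j, h⟩ else a₀) p.1.length = p.1} := by
      ext y
      have : GameHist s₁ (fun j => if h : j < p.1.length then y j else a₀) p.1.length
          = GameHist s₁ y p.1.length := by
        apply gameHist_congr
        intro i hi
        rw [dif_pos (by omega)]
      simp only [hU, Set.mem_setOf_eq, Set.mem_preimage, this]
    rw [this]
    exact hres.isOpen_preimage _ (isOpen_discrete _)
  have hcover : (Set.univ : Set (ℕ → A)) ⊆ ⋃ p : Z, U p := by
    intro y _
    obtain ⟨p, hpZ, hpre⟩ := hs (GamePlay s₁ y) (consistent1_gamePlay s₁ y)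
    exact Set.mem_iUnion.2 ⟨⟨p, hpZ⟩, (prefix_iff_gameHist s₁ y p).1 hpre⟩
  obtain ⟨F, hF⟩ := isCompact_univ.elim_finite_subcover U hUopen hcover
  set N : ℕ := F.sup (fun p => p.1.length) with hN
  have hlen : ∀ p ∈ F, p.1.length ≤ N := fun p hp => Finset.le_sup (f := fun p : Z => p.1.length) hp
  -- choose, for each finite sequence of Player 2 moves, an element of F hit by the play
  set ext : (Fin N → A) → ℕ → A := fun yb j => if h : j < N then yb ⟨j, h⟩ else a₀ with hext
  have hex : ∀ yb : Fin N → A, ∃ p ∈ F, GameHist s₁ (ext yb) p.1.length = p.1 := by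
    intro yb
    have := hF (Set.mem_univ (ext yb))
    simp only [Set.mem_iUnion, exists_prop] at this
    exact this
  choose f hfF hfp using hex
  -- counting
  have hcount : Fintype.card A ^ N ≤ ∑ p ∈ F, Fintype.card A ^ (N - p.1.length / 2) := by
    have h1 : (Finset.univ : Finset (Fin N → A)).card
        = ∑ p ∈ F, (Finset.univ.filter (fun yb => f yb = p)).card :=
      Finset.card_eq_sum_card_fiberwise (fun yb _ => hfF yb)
    have h2 : ∀ p ∈ F, (Finset.univ.filter (fun yb => f yb = p)).card
        ≤ Fintype.card A ^ (N - p.1.length / 2) := by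
      intro p hp
      set k : ℕ := p.1.length / 2 with hk
      have hkN : k ≤ N := le_trans (Nat.div_le_self _ _) (hlen p hp)
      have := Finset.card_le_card_of_injOn
        (f := fun (yb : Fin N → A) (j : Fin (N - k)) => yb ⟨k + j, by omega⟩)
        (s := Finset.univ.filter (fun yb => f yb = p))
        (t := (Finset.univ : Finset (Fin (N - k) → A)))
        (fun _ _ => Finset.mem_univ _) ?_
      · simpa [Fintype.card_fun] using this
      · intro yb hyb yb' hyb' heq
        simp only [Finset.mem_coe, Finset.mem_filter] at hyb hyb'
        funext i
        by_cases hik : (i : ℕ) < k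
        · have hi2 : 2 * (i : ℕ) + 1 < p.1.length := by omega
          have e1 := gameHist_entry s₁ (ext yb) (hyb.2 ▸ hfp yb) hi2
          have e2 := gameHist_entry s₁ (ext yb') (hyb'.2 ▸ hfp yb') hi2
          have hiN : (i : ℕ) < N := by omega
          have : ext yb i = ext yb' i := by rw [← e1, ← e2]
          simpa [hext, dif_pos hiN] using this
        · have := congrFun heq ⟨(i : ℕ) - k, by omega⟩
          simpa [show k + ((i : ℕ) - k) = (i : ℕ) by omega, Fin.ext_iff] using this
    calc Fintype.card A ^ N = (Finset.univ : Finset (Fin N → A)).card := by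
          simp [Fintype.card_fun]
      _ = _ := h1
      _ ≤ _ := Finset.sum_le_sum h2
  -- pass to ℝ≥0∞
  set c : ℝ≥0∞ := (Fintype.card A : ℝ≥0∞) with hc
  have hc0 : c ≠ 0 := by
    simp [hc, Fintype.card_ne_zero]
  have hctop : c ≠ ⊤ := by simp [hc]
  have hcast : c ^ N ≤ ∑ p ∈ F, c ^ (N - p.1.length / 2) := by
    have := hcount
    have h' : ((Fintype.card A ^ N : ℕ) : ℝ≥0∞)
        ≤ ((∑ p ∈ F, Fintype.card A ^ (N - p.1.length / 2) : ℕ) : ℝ≥0∞) :=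
      Nat.cast_le.2 this
    push_cast at h'
    exact h'
  have key : (1 : ℝ≥0∞) ≤ ∑ p ∈ F, (1 / c) ^ (p.1.length / 2) := by
    have hmul := mul_le_mul_left hcast ((c⁻¹) ^ N)
    have hL : c ^ N * (c⁻¹) ^ N = 1 := by
      rw [← mul_pow, ENNReal.mul_inv_cancel hc0 hctop, one_pow]
    rw [hL, Finset.sum_mul] at hmul
    refine hmul.trans (le_of_eq (Finset.sum_congr rfl fun p hp => ?_))
    have hkN : p.1.length / 2 ≤ N := le_trans (Nat.div_le_self _ _) (hlen p hp)
    set k : ℕ := p.1.length / 2 with hk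
    set m : ℕ := N - k with hm
    rw [show N = m + k by omega, pow_add, ← mul_assoc, ← mul_pow,
      ENNReal.mul_inv_cancel hc0 hctop, one_pow, one_mul, one_div]
  refine key.trans ?_
  exact (ENNReal.sum_le_tsum F).trans_eq rfl
end

section
/- Let A be a finite nonempty alphabet and let Z be a set of positions over A. If ∑'_{p ∈ Z} (1/|A|)^{⌊len(p)/2⌋} < 1, then Player 2 has a winning strategy for Z. -/
open scoped ENNReal

variable {A : Type*}

/-!
A potential argument in the style of Erdős–Selfridge. For a position `q` put
`Φ q = |A| ^ ⌊|q|/2⌋ * ∑_{p ∈ Z, q ≼ p} |A| ^ (-⌊|p|/2⌋)`, the sum running over the targets still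
reachable from `q`. A Player 1 move leaves the scaling factor unchanged and can only shrink the set
of reachable targets, so it does not increase `Φ`. Before a Player 2 move the `|A|` possible
continuations split the reachable targets into disjoint parts while the factor grows by `|A|`, so
the continuation of least weight does not increase `Φ` either. Hence Player 2, always choosing that
continuation, keeps `Φ ≤ Φ [] < 1`; but `Φ p ≥ 1` at every `p ∈ Z`.
-/

theorem List.eq_of_append_singleton_prefix {q p : List A} {a b : A}
    (ha : q ++ [a] <+: p) (hb : q ++ [b] <+: p) : a = b := by
  simpa using (List.prefix_of_prefix_length_le ha hb (by simp)).eq_of_length (by simp)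

theorem Consistent2.apply_ofFn_le_apply_nil {β : Type*} [Preorder β] {Φ : List A → β}
    {s₂ : List A → A} {x : ℕ → A} (hx : Consistent2 s₂ x)
    (h_even : ∀ q a, Even q.length → Φ (q ++ [a]) ≤ Φ q)
    (h_odd : ∀ q, Odd q.length → Φ (q ++ [s₂ q]) ≤ Φ q) (n : ℕ) :
    Φ (List.ofFn fun i : Fin n => x i) ≤ Φ [] := by
  induction n with
  | zero => simp
  | succ n ih =>
    have h_snoc : (List.ofFn fun i : Fin (n + 1) => x i) =
        (List.ofFn fun i : Fin n => x i) ++ [x n] := List.ofFn_succ_last ..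
    refine le_trans ?_ ih
    rw [h_snoc]
    rcases Nat.even_or_odd n with h_n | ⟨m, rfl⟩
    · exact h_even _ _ (by simpa using h_n)
    · rw [hx m]
      exact h_odd _ (by simp)

noncomputable def extensionSum (Z : Set (List A)) (w : List A → ℝ≥0∞) (q : List A) : ℝ≥0∞ :=
  ∑' p : Z, {p | q <+: p}.indicator w p

section extensionSum

variable (Z : Set (List A)) (w : List A → ℝ≥0∞)

theorem extensionSum_nil : extensionSum Z w [] = ∑' p : Z, w p := by
  simp [extensionSum]

theorem apply_le_extensionSum {p : List A} (hp : p ∈ Z) : w p ≤ extensionSum Z w p :=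
  calc w p = {p' | p <+: p'}.indicator w p := by simp
    _ ≤ extensionSum Z w p := ENNReal.le_tsum (⟨p, hp⟩ : Z)

theorem extensionSum_append_le (q : List A) (a : A) :
    extensionSum Z w (q ++ [a]) ≤ extensionSum Z w q :=
  ENNReal.tsum_le_tsum fun p => Set.indicator_le_indicator_of_subset
    (Set.ofPred_subset_ofPred.2 fun _ h => (List.prefix_append q [a]).trans h) (fun _ => bot_le) p.1

theorem sum_indicator_append_singleton_prefix_le [Fintype A] (q p : List A) :
    ∑ a : A, {p | q ++ [a] <+: p}.indicator w p ≤ {p | q <+: p}.indicator w p := by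
  classical
  simp only [Set.indicator_apply, Set.mem_ofPred_eq]
  by_cases h : ∃ a, q ++ [a] <+: p
  · obtain ⟨a, ha⟩ := h
    rw [Finset.sum_eq_single a
      (fun b _ hb => if_neg fun hb' => hb (List.eq_of_append_singleton_prefix hb' ha)) (by simp),
      if_pos ha, if_pos ((List.prefix_append q [a]).trans ha)]
  · push Not at h
    simp [h]

theorem sum_extensionSum_append_le [Fintype A] (q : List A) :
    ∑ a : A, extensionSum Z w (q ++ [a]) ≤ extensionSum Z w q := by
  simp only [extensionSum]
  rw [← Summable.tsum_finsetSum fun _ _ => ENNReal.summable]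
  exact ENNReal.tsum_le_tsum fun p => sum_indicator_append_singleton_prefix_le w q p

end extensionSum

section greedyMove

variable [Fintype A] [Nonempty A]

noncomputable def greedyMove (f : List A → ℝ≥0∞) (q : List A) : A :=
  (Finset.univ.exists_min_image (fun a => f (q ++ [a])) Finset.univ_nonempty).choose

theorem card_mul_greedyMove_le_sum (f : List A → ℝ≥0∞) (q : List A) :
    Fintype.card A * f (q ++ [greedyMove f q]) ≤ ∑ a : A, f (q ++ [a]) := by
  have h_min := (Finset.univ.exists_min_image (fun a => f (q ++ [a]))
    Finset.univ_nonempty).choose_spec.2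
  simpa [greedyMove] using
    Finset.card_nsmul_le_sum Finset.univ _ _ fun a _ => h_min a (Finset.mem_univ a)

end greedyMove

section potential

variable [Fintype A] (Z : Set (List A))

noncomputable def positionWeight (p : List A) : ℝ≥0∞ :=
  ((1 : ℝ≥0∞) / Fintype.card A) ^ (p.length / 2)

noncomputable def potential (q : List A) : ℝ≥0∞ :=
  (Fintype.card A : ℝ≥0∞) ^ (q.length / 2) * extensionSum Z positionWeight q

theorem potential_nil : potential Z [] = ∑' p : Z, positionWeight p.1 := by
  simp [potential, extensionSum_nil]

theorem one_le_potential [Nonempty A] {p : List A} (hp : p ∈ Z) : 1 ≤ potential Z p := by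
  have h_card : (Fintype.card A : ℝ≥0∞) * (1 / Fintype.card A) = 1 := by
    rw [one_div, ENNReal.mul_inv_cancel (by simp) (by simp)]
  calc (1 : ℝ≥0∞) = (Fintype.card A : ℝ≥0∞) ^ (p.length / 2) * positionWeight p := by
        rw [positionWeight, ← mul_pow, h_card, one_pow]
    _ ≤ potential Z p := mul_le_mul_right (apply_le_extensionSum Z _ hp) _

theorem potential_append_le_of_even {q : List A} (hq : Even q.length) (a : A) :
    potential Z (q ++ [a]) ≤ potential Z q := by
  have h_len : (q ++ [a]).length / 2 = q.length / 2 := by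
    have := Nat.even_iff.mp hq
    simp only [List.length_append, List.length_singleton]
    omega
  rw [potential, potential, h_len]
  exact mul_le_mul_right (extensionSum_append_le Z _ q a) _

theorem potential_append_greedyMove_le_of_odd [Nonempty A] {q : List A} (hq : Odd q.length) :
    potential Z (q ++ [greedyMove (extensionSum Z positionWeight) q]) ≤ potential Z q := by
  have h_len (a : A) : (q ++ [a]).length / 2 = q.length / 2 + 1 := by
    have := Nat.odd_iff.mp hq
    simp only [List.length_append, List.length_singleton]
    omega
  rw [potential, potential, h_len, pow_succ, mul_assoc]
  exact mul_le_mul_right ((card_mul_greedyMove_le_sum _ q).trans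
    (sum_extensionSum_append_le Z _ q)) _

end potential

/-- If `∑'_{p ∈ Z} (1/|A|)^⌊len(p)/2⌋ < 1`, then Player 2 has a winning strategy. -/
theorem sum_lt_one_imp_player2_wins [Fintype A] [Nonempty A] (Z : Set (List A))
    (h : ∑' p : Z, ((1 : ℝ≥0∞) / Fintype.card A) ^ (p.1.length / 2) < 1) :
    P2Wins Z := by
  refine ⟨greedyMove (extensionSum Z positionWeight), fun x hx ⟨p, hpZ, hpx⟩ => ?_⟩
  have h_bound := hx.apply_ofFn_le_apply_nil (Φ := potential Z)
    (fun q a hq => potential_append_le_of_even Z hq a)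
    (fun q hq => potential_append_greedyMove_le_of_odd Z hq) p.length
  rw [show (List.ofFn fun i : Fin p.length => x i) = p from hpx, potential_nil] at h_bound
  exact (one_le_potential Z hpZ |>.trans h_bound |>.trans_lt h).false
end

section
/- Let A be a finite nonempty alphabet and let Z be a nonempty set of positions over A. If Player 1 has a winning strategy for Z, then for every natural number n with n ≤ len(p) for all p ∈ Z, there exists a position p* of length n such that |A|^{⌊n/2⌋} · ∑'_{p ∈ Z, p* is a prefix of p} (1/|A|)^{⌊len(p)/2⌋} ≥ 1. -/
open scoped ENNReal

variable {A : Type*}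

namespace GameAux

variable (s₁ : List A → A) (y : ℕ → A)

def pref : ℕ → List A
  | 0 => []
  | (i+1) => pref i ++ [if Even i then s₁ (pref i) else y i]

def play (i : ℕ) : A := if Even i then s₁ (pref s₁ y i) else y i

lemma length_pref (i : ℕ) : (pref s₁ y i).length = i := by
  induction i with
  | zero => rfl
  | succ i ih => simp [pref, ih]

lemma pref_eq_ofFn (i : ℕ) : pref s₁ y i = List.ofFn (fun j : Fin i => play s₁ y j) := by
  induction i with
  | zero => rfl
  | succ i ih =>
    rw [List.ofFn_succ', List.concat_eq_append]
    simp [pref, play, ih]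

lemma play_even {i : ℕ} (hi : Even i) : play s₁ y i = s₁ (pref s₁ y i) := if_pos hi

lemma play_odd {i : ℕ} (hi : ¬ Even i) : play s₁ y i = y i := if_neg hi

lemma play_consistent : Consistent1 s₁ (play s₁ y) := by
  intro m
  rw [← pref_eq_ofFn, play_even s₁ y (even_two_mul m)]

lemma pref_congr (y y' : ℕ → A) (i : ℕ) (h : ∀ j < i, ¬ Even j → y j = y' j) :
    pref s₁ y i = pref s₁ y' i := by
  induction i with
  | zero => rfl
  | succ i ih =>
    have hi : pref s₁ y i = pref s₁ y' i := ih (fun j hj => h j (Nat.lt_succ_of_lt hj))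
    by_cases he : Even i <;>
      simp [pref, hi, he, h i (Nat.lt_succ_self i)]

lemma play_congr (y y' : ℕ → A) (i : ℕ) (h : ∀ j ≤ i, ¬ Even j → y j = y' j) :
    play s₁ y i = play s₁ y' i := by
  unfold play
  rw [pref_congr s₁ y y' i (fun j hj => h j hj.le)]
  by_cases he : Even i <;> simp [he, h i le_rfl]

lemma pref_eq_of_consistent {x : ℕ → A} (hx : Consistent1 s₁ x) (i : ℕ) :
    pref s₁ x i = List.ofFn (fun j : Fin i => x j) := by
  induction i with
  | zero => rfl
  | succ i ih =>
    rw [List.ofFn_succ', List.concat_eq_append]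
    show pref s₁ x i ++ _ = _
    rw [ih]
    congr 1
    by_cases he : Even i
    · obtain ⟨m, rfl⟩ := he
      have he' : Even (m + m) := ⟨m, rfl⟩
      have := hx m
      rw [two_mul] at this
      simp [he', ← this]
    · simp [he]

lemma play_eq_of_consistent {x : ℕ → A} (hx : Consistent1 s₁ x) (i : ℕ) :
    play s₁ x i = x i := by
  unfold play
  by_cases he : Even i
  · obtain ⟨m, rfl⟩ := he
    have he' : Even (m + m) := ⟨m, rfl⟩
    rw [pref_eq_of_consistent s₁ hx]
    have := hx m
    rw [two_mul] at this
    simp [he', ← this]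
  · simp [he]


lemma prefixOfPlay_ofFn (x : ℕ → A) (m : ℕ) :
    PrefixOfPlay (List.ofFn fun i : Fin m => x i) x := by
  unfold PrefixOfPlay
  apply List.ext_getElem <;> simp

lemma getElem_of_prefixOfPlay {p : List A} {x : ℕ → A} (h : PrefixOfPlay p x)
    {i : ℕ} (hi : i < p.length) : p[i] = x i := by
  rw [List.getElem_of_eq h.symm hi]
  simp

lemma prefixOfPlay_of_forall {p : List A} {x : ℕ → A}
    (h : ∀ i (hi : i < p.length), p[i] = x i) : PrefixOfPlay p x := by
  unfold PrefixOfPlay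
  apply List.ext_getElem <;> simp [h]

lemma prefix_of_prefixOfPlay {p q : List A} {x : ℕ → A} (hp : PrefixOfPlay p x)
    (hq : PrefixOfPlay q x) (hl : q.length ≤ p.length) : q <+: p := by
  have hq2 : q = p.take q.length := by
    apply List.ext_getElem
    · simp [hl]
    · intro i hi hi2
      have hip : i < p.length := lt_of_lt_of_le hi hl
      simp [List.getElem_take, getElem_of_prefixOfPlay hq hi,
        getElem_of_prefixOfPlay hp hip]
  rw [hq2]
  exact List.take_prefix _ _

lemma card_filter_not_even (m : ℕ) :
    ((Finset.range m).filter fun i => ¬ Even i).card = m / 2 := by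
  induction m with
  | zero => rfl
  | succ m ih =>
    rw [Finset.range_add_one, Finset.filter_insert]
    by_cases he : Even m
    · rw [if_neg (not_not_intro he), ih]
      have := Nat.even_iff.mp he
      omega
    · rw [if_pos he, Finset.card_insert_of_notMem (by simp), ih]
      have := Nat.odd_iff.mp (Nat.not_even_iff_odd.mp he)
      omega

lemma exists_uniform_bound [Finite A] {Z : Set (List A)} {s₁ : List A → A}
    (hs : ∀ x : ℕ → A, Consistent1 s₁ x → ∃ p ∈ Z, PrefixOfPlay p x) :
    ∃ T : Finset (List A), ↑T ⊆ Z ∧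
      ∀ x : ℕ → A, Consistent1 s₁ x → ∃ p ∈ T, PrefixOfPlay p x := by
  letI : TopologicalSpace A := ⊥
  haveI : DiscreteTopology A := ⟨rfl⟩
  set C : Set (ℕ → A) := {x | Consistent1 s₁ x} with hCdef
  have hC : IsCompact C := by
    apply IsCompact.of_isClosed_subset isCompact_univ ?_ (Set.subset_univ C)
    have hCeq : C = ⋂ m : ℕ,
        {x : ℕ → A | x (2*m) = s₁ (List.ofFn fun i : Fin (2*m) => x i)} := by
      ext x
      simp [hCdef, Consistent1, Set.mem_iInter]
    rw [hCeq]
    apply isClosed_iInter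
    intro m
    apply isClosed_eq (continuous_apply (2*m))
    have h1 : Continuous (fun x : ℕ → A => fun i : Fin (2*m) => x i) :=
      continuous_pi fun i => continuous_apply _
    exact (continuous_of_discreteTopology
      (f := fun v : Fin (2*m) → A => s₁ (List.ofFn v))).comp h1
  have hopen : ∀ p ∈ Z, IsOpen {x : ℕ → A | PrefixOfPlay p x} := by
    intro p _
    have he : {x : ℕ → A | PrefixOfPlay p x}
        = (fun x : ℕ → A => fun i : Fin p.length => x i) ⁻¹' {v | List.ofFn v = p} := rfl
    rw [he]
    exact (continuous_pi fun i => continuous_apply _).isOpen_preimage _ (isOpen_discrete _)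
  have hcov : C ⊆ ⋃ p ∈ Z, {x : ℕ → A | PrefixOfPlay p x} := by
    intro x hx
    obtain ⟨p, hpZ, hpx⟩ := hs x hx
    exact Set.mem_biUnion hpZ hpx
  obtain ⟨T0, hT0Z, hT0fin, hT0cov⟩ := hC.elim_finite_subcover_image hopen hcov
  refine ⟨hT0fin.toFinset, by simpa using hT0Z, ?_⟩
  intro x hx
  have hmem := hT0cov hx
  simp only [Set.mem_iUnion, Set.mem_setOf_eq] at hmem
  obtain ⟨p, hp, hpx⟩ := hmem
  exact ⟨p, hT0fin.mem_toFinset.mpr hp, hpx⟩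

lemma key [Fintype A] [Nonempty A] {Z : Set (List A)} {s₁ : List A → A}
    (hs : ∀ x : ℕ → A, Consistent1 s₁ x → ∃ p ∈ Z, PrefixOfPlay p x)
    (n : ℕ) (hn : ∀ p ∈ Z, n ≤ p.length) :
    ∃ pStar : List A, pStar.length = n ∧ ∃ T' : Finset (List A),
      (↑T' ⊆ {p | p ∈ Z ∧ pStar <+: p}) ∧
      ((1 : ℝ≥0∞) / Fintype.card A) ^ (n / 2) ≤
        ∑ p ∈ T', ((1 : ℝ≥0∞) / Fintype.card A) ^ (p.length / 2) := by
  classical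
  obtain ⟨T, hTZ, hTcov⟩ := exists_uniform_bound hs
  set k := Fintype.card A with hk
  set N := max n (T.sup List.length) with hN
  have hnN : n ≤ N := le_max_left _ _
  have hTlen : ∀ p ∈ T, p.length ≤ N :=
    fun p hp => le_trans (Finset.le_sup hp) (le_max_right _ _)
  set y0 : ℕ → A := fun _ => Classical.arbitrary A with hy0
  set pStar := List.ofFn (fun i : Fin n => play s₁ y0 i) with hpStar
  have hlen : pStar.length = n := by simp [hpStar]
  set yext : (Fin N → A) → ℕ → A :=
    fun ω i => if h : i < N then ω ⟨i, h⟩ else y0 i with hyext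
  set G : List A → Finset (Fin N → A) := fun p =>
    Finset.univ.filter (fun ω => PrefixOfPlay p (play s₁ (yext ω))) with hG
  set T' := T.filter (fun p => pStar <+: p) with hT'
  -- membership characterization
  have hGmem : ∀ p ω, ω ∈ G p ↔ PrefixOfPlay p (play s₁ (yext ω)) := by
    intro p ω
    simp [hG]
  -- odd coordinates of the play are the coordinates of ω
  have hodd : ∀ (ω : Fin N → A) (i : ℕ) (hi : i < N) (ho : ¬ Even i),
      play s₁ (yext ω) i = ω ⟨i, hi⟩ := by
    intro ω i hi ho
    rw [play_odd _ _ ho]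
    simp [hyext, hi]
  -- covering step
  have hsub : G pStar ⊆ T'.biUnion G := by
    intro ω hω
    rw [hGmem] at hω
    obtain ⟨p, hpT, hpx⟩ := hTcov _ (play_consistent s₁ (yext ω))
    have hpre : pStar <+: p :=
      prefix_of_prefixOfPlay hpx hω (by rw [hlen]; exact hn p (hTZ hpT))
    refine Finset.mem_biUnion.mpr ⟨p, Finset.mem_filter.mpr ⟨hpT, hpre⟩, ?_⟩
    rw [hGmem]
    exact hpx
  -- cardinality of index sets
  have hcard : ∀ m ≤ N, ((Finset.range N).filter (fun i => Even i ∨ m ≤ i)).card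
      = N - m / 2 := by
    intro m hm
    have h1 : (Finset.range N).filter (fun i => ¬ (Even i ∨ m ≤ i))
        = (Finset.range m).filter (fun i => ¬ Even i) := by
      ext i
      simp only [Finset.mem_filter, Finset.mem_range, not_or, not_le]
      constructor
      · rintro ⟨-, he, him⟩; exact ⟨him, he⟩
      · rintro ⟨him, he⟩; exact ⟨lt_of_lt_of_le him hm, he, him⟩
    have h2 := Finset.card_filter_add_card_filter_not
      (s := Finset.range N) (p := fun i => Even i ∨ m ≤ i)
    rw [h1, card_filter_not_even, Finset.card_range] at h2
    omega
  -- lower bound for G pStar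
  have hlow : k ^ (N - n / 2) ≤ (G pStar).card := by
    set B := (Finset.range N).filter (fun i => Even i ∨ n ≤ i) with hB
    have hBN : ∀ i ∈ B, i < N := fun i hi => Finset.mem_range.mp (Finset.mem_filter.mp hi).1
    set F : ({i : ℕ // i ∈ B} → A) → (Fin N → A) :=
      fun f i => if hmem : (i : ℕ) ∈ B then f ⟨i, hmem⟩ else play s₁ y0 i with hF
    have hmaps : ∀ f, F f ∈ G pStar := by
      intro f
      rw [hGmem]
      apply prefixOfPlay_of_forall
      intro i hi
      have hi' : i < n := hlen ▸ hi
      have hiN : i < N := lt_of_lt_of_le hi' hnN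
      have hagree : ∀ j ≤ i, ¬ Even j → yext (F f) j = y0 j := by
        intro j hj ho
        have hjn : j < n := lt_of_le_of_lt hj hi'
        have hjN : j < N := lt_of_lt_of_le hjn hnN
        have hjB : j ∉ B := by
          simp only [hB, Finset.mem_filter, Finset.mem_range, not_and, not_or, not_le]
          intro _
          exact ⟨ho, hjn⟩
        have : yext (F f) j = F f ⟨j, hjN⟩ := by simp [hyext, hjN]
        rw [this]
        simp only [hF, dif_neg hjB]
        exact play_odd _ _ ho
      have hpl : play s₁ (yext (F f)) i = play s₁ y0 i := play_congr _ _ _ _ hagree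
      rw [hpl]
      simp [hpStar]
    have hinj : Set.InjOn F ↑(Finset.univ : Finset ({i : ℕ // i ∈ B} → A)) := by
      intro f _ g _ hfg
      funext b
      have hb : (b : ℕ) < N := hBN _ b.2
      have := congrFun hfg ⟨b, hb⟩
      simpa [hF, b.2] using this
    calc k ^ (N - n / 2) = Fintype.card ({i : ℕ // i ∈ B} → A) := by
          rw [Fintype.card_fun, Fintype.card_coe, hcard n hnN, hk]
      _ = (Finset.univ : Finset ({i : ℕ // i ∈ B} → A)).card := Finset.card_univ.symm
      _ ≤ (G pStar).card := Finset.card_le_card_of_injOn F (fun f _ => hmaps f) hinj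
  -- upper bound for each G p
  have hup : ∀ p ∈ T', (G p).card ≤ k ^ (N - p.length / 2) := by
    intro p hpT'
    have hpT : p ∈ T := (Finset.mem_filter.mp hpT').1
    have hpN : p.length ≤ N := hTlen p hpT
    set B := (Finset.range N).filter (fun i => Even i ∨ p.length ≤ i) with hB
    have hBN : ∀ i ∈ B, i < N := fun i hi => Finset.mem_range.mp (Finset.mem_filter.mp hi).1
    set r : (Fin N → A) → ({i : ℕ // i ∈ B} → A) :=
      fun ω b => ω ⟨b, hBN _ b.2⟩ with hr
    have hinj : Set.InjOn r ↑(G p) := by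
      intro ω hω ω' hω' hr'
      have hω1 : PrefixOfPlay p (play s₁ (yext ω)) := (hGmem p ω).mp (by simpa using hω)
      have hω2 : PrefixOfPlay p (play s₁ (yext ω')) := (hGmem p ω').mp (by simpa using hω')
      funext i
      by_cases hiB : (i : ℕ) ∈ B
      · have := congrFun hr' ⟨i, hiB⟩
        simpa [hr] using this
      · simp only [hB, Finset.mem_filter, Finset.mem_range, not_and, not_or, not_le] at hiB
        obtain ⟨ho, hip⟩ := hiB i.2
        have e1 : ω i = p[(i : ℕ)]'hip := by
          rw [getElem_of_prefixOfPlay hω1 hip, hodd ω (i : ℕ) i.2 ho]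
        have e2 : ω' i = p[(i : ℕ)]'hip := by
          rw [getElem_of_prefixOfPlay hω2 hip, hodd ω' (i : ℕ) i.2 ho]
        rw [e1, e2]
    calc (G p).card ≤ (Finset.univ : Finset ({i : ℕ // i ∈ B} → A)).card :=
          Finset.card_le_card_of_injOn r (fun _ _ => Finset.mem_univ _) hinj
      _ = k ^ (N - p.length / 2) := by
          rw [Finset.card_univ, Fintype.card_fun, Fintype.card_coe, hcard _ hpN, hk]
  -- combine over ℕ
  have hNat : k ^ (N - n / 2) ≤ ∑ p ∈ T', k ^ (N - p.length / 2) :=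
    calc k ^ (N - n / 2) ≤ (G pStar).card := hlow
      _ ≤ (T'.biUnion G).card := Finset.card_le_card hsub
      _ ≤ ∑ p ∈ T', (G p).card := Finset.card_biUnion_le
      _ ≤ ∑ p ∈ T', k ^ (N - p.length / 2) := Finset.sum_le_sum hup
  -- transfer to ℝ≥0∞
  have hK0 : (k : ℝ≥0∞) ≠ 0 := Nat.cast_ne_zero.mpr Fintype.card_ne_zero
  have hKtop : (k : ℝ≥0∞) ≠ ⊤ := ENNReal.natCast_ne_top k
  have pow_id : ∀ m, m ≤ N → ((k : ℝ≥0∞)) ^ (N - m) = (k : ℝ≥0∞) ^ N * (1 / k) ^ m := by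
    intro m hm
    rw [one_div, ← ENNReal.inv_pow]
    have hsplit : (k : ℝ≥0∞) ^ N = (k : ℝ≥0∞) ^ (N - m) * (k : ℝ≥0∞) ^ m := by
      rw [← pow_add]
      congr 1
      omega
    rw [hsplit, mul_assoc, ENNReal.mul_inv_cancel (pow_ne_zero _ hK0)
      (ENNReal.pow_ne_top hKtop), mul_one]
  have hcast : ((k : ℝ≥0∞)) ^ (N - n / 2) ≤ ∑ p ∈ T', ((k : ℝ≥0∞)) ^ (N - p.length / 2) := by
    have := hNat
    exact_mod_cast this
  rw [pow_id (n / 2) (le_trans (Nat.div_le_self n 2) hnN)] at hcast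
  have hsum2 : ∑ p ∈ T', ((k : ℝ≥0∞)) ^ (N - p.length / 2)
      = (k : ℝ≥0∞) ^ N * ∑ p ∈ T', ((1 : ℝ≥0∞) / k) ^ (p.length / 2) := by
    rw [Finset.mul_sum]
    apply Finset.sum_congr rfl
    intro p hp
    exact pow_id _ (le_trans (Nat.div_le_self _ 2) (hTlen p (Finset.mem_filter.mp hp).1))
  rw [hsum2] at hcast
  have hfinal := (ENNReal.mul_le_mul_iff_right (pow_ne_zero _ hK0) (ENNReal.pow_ne_top hKtop)).mp hcast
  refine ⟨pStar, hlen, T', ?_, hfinal⟩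
  intro p hp
  have := Finset.mem_filter.mp hp
  exact ⟨hTZ this.1, this.2⟩

end GameAux

/-- If Player 1 has a winning strategy for `Z` (nonempty), then for every `n` below all
lengths of positions of `Z` there is a position `pStar` of length `n` with
`|A|^⌊n/2⌋ · ∑'_{p ∈ Z, pStar prefix of p} (1/|A|)^⌊len(p)/2⌋ ≥ 1`. -/
theorem player1_wins_imp_local_sum_ge_one [Fintype A] [Nonempty A] (Z : Set (List A))
    (hne : Z.Nonempty) (h : P1Wins Z) (n : ℕ) (hn : ∀ p ∈ Z, n ≤ p.length) :
    ∃ pStar : List A, pStar.length = n ∧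
      1 ≤ (Fintype.card A : ℝ≥0∞) ^ (n / 2) *
        ∑' p : {p : List A // p ∈ Z ∧ pStar <+: p},
          ((1 : ℝ≥0∞) / Fintype.card A) ^ (p.1.length / 2) := by
  classical
  obtain ⟨s₁, hs⟩ := h
  obtain ⟨pStar, hlen, T', hT'sub, hsum⟩ := GameAux.key hs n hn
  refine ⟨pStar, hlen, ?_⟩
  have hK0 : (Fintype.card A : ℝ≥0∞) ≠ 0 := Nat.cast_ne_zero.mpr Fintype.card_ne_zero
  have hKtop : (Fintype.card A : ℝ≥0∞) ≠ ⊤ := ENNReal.natCast_ne_top _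
  set t'' : Finset {p : List A // p ∈ Z ∧ pStar <+: p} :=
    T'.attach.map ⟨fun a => ⟨a.1, hT'sub a.2⟩,
      fun a b hab => by
        apply Subtype.ext
        simpa using congrArg Subtype.val hab⟩ with ht''
  have hsum_eq : ∑ q ∈ t'',
        ((1 : ℝ≥0∞) / Fintype.card A) ^ (q.1.length / 2)
      = ∑ p ∈ T', ((1 : ℝ≥0∞) / Fintype.card A) ^ (p.length / 2) := by
    rw [ht'', Finset.sum_map]
    exact Finset.sum_attach _ (fun p : List A => ((1 : ℝ≥0∞) / Fintype.card A) ^ (p.length / 2))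
  have htsum : ∑ q ∈ t'', ((1 : ℝ≥0∞) / Fintype.card A) ^ (q.1.length / 2)
      ≤ ∑' p : {p : List A // p ∈ Z ∧ pStar <+: p},
          ((1 : ℝ≥0∞) / Fintype.card A) ^ (p.1.length / 2) :=
    ENNReal.sum_le_tsum t''
  have hle : ((1 : ℝ≥0∞) / Fintype.card A) ^ (n / 2)
      ≤ ∑' p : {p : List A // p ∈ Z ∧ pStar <+: p},
          ((1 : ℝ≥0∞) / Fintype.card A) ^ (p.1.length / 2) :=
    le_trans hsum (hsum_eq ▸ htsum)
  calc (1 : ℝ≥0∞)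
      = (Fintype.card A : ℝ≥0∞) ^ (n / 2) * ((1 : ℝ≥0∞) / Fintype.card A) ^ (n / 2) := by
        rw [one_div, ← mul_pow, ENNReal.mul_inv_cancel hK0 hKtop, one_pow]
    _ ≤ _ := mul_le_mul_right hle _
end

section
/- Let A be a finite nonempty alphabet and let Z be a set of positions over A. If Player 1 has a winning strategy for Z, then there exists a subset Z' ⊆ Z such that Player 1 has a winning strategy for Z' and ∑'_{p ∈ Z'} (1/|A|)^{⌊len(p)/2⌋} = 1. -/
/-!
Keep, among the positions of `Z` consistent with Player 1's winning strategy `s₁`, those with no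
proper prefix in `Z`; `s₁` still wins for this prefix-free set `Z'`. Now let Player 2 move
uniformly at random against `s₁`. The events "the play passes through `p`" for `p ∈ Z'` are
disjoint (`Z'` is prefix-free) and exhaust all outcomes (`s₁` wins), and since Player 1's moves in
`p` are forced, the event has probability `|A|^(-⌊len p / 2⌋)`. Summing gives `1`.
-/

open scoped ENNReal

variable {A : Type*}

open MeasureTheory Function

theorem prefixOfPlay_iff {p : List A} {x : ℕ → A} :
    PrefixOfPlay p x ↔ ∀ i (h : i < p.length), x i = p[i] := by
  unfold PrefixOfPlay
  constructor
  · intro hp i h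
    have := List.getElem_of_eq hp (i := i) (by simpa using h)
    rwa [List.getElem_ofFn] at this
  · intro h
    exact List.ext_getElem (by simp) fun i _ hi => by simp [h i hi]

theorem PrefixOfPlay.isPrefix_of_length_le {p q : List A} {x : ℕ → A} (hp : PrefixOfPlay p x)
    (hq : PrefixOfPlay q x) (hl : p.length ≤ q.length) : p <+: q := by
  rw [prefixOfPlay_iff] at hp hq
  have : q.take p.length = p :=
    List.ext_getElem (by simp [hl]) fun i _ hi => by
      rw [List.getElem_take, ← hp i hi, hq i (by omega)]
  exact this ▸ List.take_prefix _ _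

theorem PrefixOfPlay.of_isPrefix {p q : List A} {x : ℕ → A} (hp : PrefixOfPlay p x)
    (hqp : q <+: p) : PrefixOfPlay q x := by
  rw [prefixOfPlay_iff] at *
  intro i h
  rw [hp i (lt_of_lt_of_le h hqp.length_le)]
  exact (hqp.getElem h).symm

theorem PrefixOfPlay.ofFn_eq_take {p : List A} {x : ℕ → A} (hp : PrefixOfPlay p x) {m : ℕ}
    (hm : m ≤ p.length) : List.ofFn (fun i : Fin m => x i) = p.take m :=
  (hp.of_isPrefix (List.take_prefix m p)).symm ▸ by simp [hm]

theorem exists_minimal_prefixOfPlay {Z : Set (List A)} {x : ℕ → A}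
    (hx : ∃ p ∈ Z, PrefixOfPlay p x) :
    ∃ p ∈ Z, PrefixOfPlay p x ∧ ∀ q ∈ Z, q <+: p → q = p := by
  classical
  have hne : ∃ m, ∃ p ∈ Z, p.length = m ∧ PrefixOfPlay p x :=
    let ⟨p, hpZ, hp⟩ := hx; ⟨p.length, p, hpZ, rfl, hp⟩
  obtain ⟨p, hpZ, hplen, hp⟩ := Nat.find_spec hne
  refine ⟨p, hpZ, hp, fun q hqZ hqp => hqp.eq_of_length_le ?_⟩
  have := Nat.find_min' hne ⟨q, hqZ, rfl, hp.of_isPrefix hqp⟩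
  omega

def PosConsistent1 (s₁ : List A → A) (p : List A) : Prop :=
  ∀ i (h : 2 * i < p.length), p[2 * i] = s₁ (p.take (2 * i))

theorem Consistent1.posConsistent1 {s₁ : List A → A} {x : ℕ → A} (hx : Consistent1 s₁ x)
    {p : List A} (hp : PrefixOfPlay p x) : PosConsistent1 s₁ p := by
  intro i h
  rw [← prefixOfPlay_iff.1 hp (2 * i) h, hx i, hp.ofFn_eq_take h.le]

/-- The play in which Player 1 follows `s₁` and Player 2's `i`-th move is `y i`. -/
def play (s₁ : List A → A) (y : ℕ → A) (m : ℕ) : A :=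
  if m % 2 = 1 then y (m / 2) else s₁ (List.ofFn fun i : Fin m => play s₁ y i)

theorem play_two_mul_add_one (s₁ : List A → A) (y : ℕ → A) (i : ℕ) :
    play s₁ y (2 * i + 1) = y i := by
  rw [play, if_pos (by omega)]
  congr
  omega

theorem consistent1_play (s₁ : List A → A) (y : ℕ → A) : Consistent1 s₁ (play s₁ y) :=
  fun i => by rw [play, if_neg (by omega)]

def player2Moves (p : List A) : List A :=
  List.ofFn fun i : Fin (p.length / 2) => p[2 * i.1 + 1]'(by omega)

theorem length_player2Moves (p : List A) : (player2Moves p).length = p.length / 2 :=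
  List.length_ofFn

theorem prefixOfPlay_player2Moves_iff {p : List A} {y : ℕ → A} :
    PrefixOfPlay (player2Moves p) y ↔ ∀ i (h : 2 * i + 1 < p.length), y i = p[2 * i + 1] := by
  simp only [prefixOfPlay_iff, player2Moves, List.length_ofFn, List.getElem_ofFn]
  exact ⟨fun H i h => H i (by omega), fun H i h => H i (by omega)⟩

theorem prefixOfPlay_play_iff {s₁ : List A → A} {p : List A} (hp : PosConsistent1 s₁ p)
    {y : ℕ → A} : PrefixOfPlay p (play s₁ y) ↔ PrefixOfPlay (player2Moves p) y := by
  rw [prefixOfPlay_player2Moves_iff, prefixOfPlay_iff]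
  refine ⟨fun H i h => play_two_mul_add_one s₁ y i ▸ H _ h, fun H m => ?_⟩
  induction m using Nat.strong_induction_on with
  | _ m IH =>
    intro h
    obtain ⟨i, rfl | rfl⟩ := Nat.even_or_odd' m
    · have hpre : PrefixOfPlay (p.take (2 * i)) (play s₁ y) :=
        prefixOfPlay_iff.2 fun j hj => by
          simpa using IH j (by simp at hj; omega) (by simp at hj; omega)
      rw [consistent1_play s₁ y i, hpre.ofFn_eq_take (by simp; omega), List.take_take, min_self,
        hp i h]
    · exact play_two_mul_add_one s₁ y i ▸ H i h

theorem setOf_prefixOfPlay_eq_pi (l : List A) :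
    {y | PrefixOfPlay l y} =
      Set.pi (Finset.range l.length : Set ℕ) fun i => {a | l[i]? = some a} := by
  ext y
  simp only [Set.mem_ofPred_eq, Set.mem_pi, Finset.coe_range, Set.mem_Iio,
    List.getElem?_eq_some_iff, prefixOfPlay_iff]
  exact ⟨fun H i h => ⟨h, (H i h).symm⟩, fun H i h => (H i h).2.symm⟩

section Measure

variable [MeasurableSpace A] [MeasurableSingletonClass A]

theorem measurableSet_setOf_getElem?_eq_some (l : List A) (i : ℕ) :
    MeasurableSet {a | l[i]? = some a} :=
  Set.Subsingleton.measurableSet fun _ ha _ hb => Option.some_injective _ (ha.symm.trans hb)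

theorem measurableSet_setOf_prefixOfPlay (l : List A) : MeasurableSet {y | PrefixOfPlay l y} := by
  rw [setOf_prefixOfPlay_eq_pi]
  exact .pi (Set.to_countable _) fun i _ => measurableSet_setOf_getElem?_eq_some l i

theorem infinitePi_setOf_prefixOfPlay (ν : Measure A) [IsProbabilityMeasure ν] (l : List A) :
    Measure.infinitePi (fun _ : ℕ => ν) {y | PrefixOfPlay l y} =
      (l.map fun a => ν {a}).prod := by
  rw [setOf_prefixOfPlay_eq_pi,
    Measure.infinitePi_pi _ fun i _ => measurableSet_setOf_getElem?_eq_some l i,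
    Finset.prod_range fun i => ν {a | l[i]? = some a}, ← Fin.prod_univ_fun_getElem]
  simp

theorem tsum_prod_player2Moves_eq_one [Countable A] (ν : Measure A) [IsProbabilityMeasure ν]
    {s₁ : List A → A} {Z : Set (List A)} (hcons : ∀ p ∈ Z, PosConsistent1 s₁ p)
    (hanti : IsAntichain (· <+: ·) Z)
    (hcover : ∀ x, Consistent1 s₁ x → ∃ p ∈ Z, PrefixOfPlay p x) :
    ∑' p : Z, ((player2Moves p.1).map fun a => ν {a}).prod = 1 := by
  let E : Z → Set (ℕ → A) := fun p => {y | PrefixOfPlay p.1 (play s₁ y)}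
  have hE : ∀ p : Z, E p = {y | PrefixOfPlay (player2Moves p.1) y} :=
    fun p => Set.ext fun y => prefixOfPlay_play_iff (hcons p p.2)
  have hdisj : Pairwise (Disjoint on E) := by
    intro p q hpq
    refine Set.disjoint_left.2 fun y hp hq => hpq ?_
    rcases le_total p.1.length q.1.length with hl | hl
    · exact Subtype.ext (hanti.eq p.2 q.2 (PrefixOfPlay.isPrefix_of_length_le hp hq hl))
    · exact Subtype.ext (hanti.eq q.2 p.2 (PrefixOfPlay.isPrefix_of_length_le hq hp hl)).symm
  have hunion : ⋃ p, E p = Set.univ :=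
    Set.eq_univ_of_forall fun y =>
      let ⟨p, hpZ, hp⟩ := hcover _ (consistent1_play s₁ y)
      Set.mem_iUnion.2 ⟨⟨p, hpZ⟩, hp⟩
  have hmeas : ∀ p, MeasurableSet (E p) :=
    fun p => hE p ▸ measurableSet_setOf_prefixOfPlay _
  calc ∑' p : Z, ((player2Moves p.1).map fun a => ν {a}).prod
      = ∑' p, Measure.infinitePi (fun _ : ℕ => ν) (E p) := by
        simp only [hE, infinitePi_setOf_prefixOfPlay]
    _ = 1 := by rw [← measure_iUnion hdisj hmeas, hunion, measure_univ]

end Measure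

/-- If Player 1 has a winning strategy for `Z`, there is `Z' ⊆ Z` for which Player 1 has
a winning strategy and `∑'_{p ∈ Z'} (1/|A|)^⌊len(p)/2⌋ = 1`. -/
theorem player1_wins_imp_minimal_size_subset [Fintype A] [Nonempty A] (Z : Set (List A))
    (h : P1Wins Z) :
    ∃ Z' ⊆ Z, P1Wins Z' ∧
      ∑' p : Z', ((1 : ℝ≥0∞) / Fintype.card A) ^ (p.1.length / 2) = 1 := by
  obtain ⟨s₁, hs₁⟩ := h
  let Z' := {p ∈ Z | PosConsistent1 s₁ p ∧ ∀ q ∈ Z, q <+: p → q = p}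
  have hcover : ∀ x, Consistent1 s₁ x → ∃ p ∈ Z', PrefixOfPlay p x := fun x hx =>
    let ⟨p, hpZ, hp, hmin⟩ := exists_minimal_prefixOfPlay (hs₁ x hx)
    ⟨p, ⟨hpZ, hx.posConsistent1 hp, hmin⟩, hp⟩
  have hanti : IsAntichain (· <+: ·) Z' := fun p hp q hq hpq hpq' => hpq (hq.2.2 p hp.1 hpq')
  refine ⟨Z', fun p hp => hp.1, ⟨s₁, hcover⟩, ?_⟩
  let _ : MeasurableSpace A := ⊤
  have hν (a : A) :
      (PMF.uniformOfFintype A).toMeasure {a} = (Fintype.card A : ℝ≥0∞)⁻¹ := by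
    rw [PMF.toMeasure_apply_singleton _ _ (measurableSet_singleton a), PMF.uniformOfFintype_apply]
  simpa only [hν, List.map_const', List.prod_replicate, length_player2Moves, one_div] using
    tsum_prod_player2Moves_eq_one (PMF.uniformOfFintype A).toMeasure (fun p hp => hp.2.1) hanti
      hcover
end

section
/- Let A be a finite nonempty alphabet, let s₁ be a strategy of Player 1 on the full tree over A, and let C be a finite set of finite sequences over A. Define Z_{s₁}(C) to be the set of positions p = ⟨a₁, c₁, a₂, c₂, …, a_n, c_n⟩ such that ⟨c₁, …, c_n⟩ ∈ C and, for each 1 ≤ i ≤ n, a_i = s₁(⟨a₁, c₁, …, a_{i−1}, c_{i−1}⟩) (the actions prescribed to Player 1 by s₁). Then C is a maximal prefix code over A if and only if both of the following hold: (1) ∑_{p ∈ Z_{s₁}(C)} (1/|A|)^{⌊len(p)/2⌋} = 1, and (2) s₁ is a winning strategy for Player 1 for Z_{s₁}(C). -/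
open scoped ENNReal

variable {A : Type*}

/-- A prefix code: no element is a (proper) prefix of another element. -/
def IsPrefixCode (C : Set (List A)) : Prop :=
  ∀ p ∈ C, ∀ q ∈ C, p <+: q → p = q

/-- A maximal prefix code: a prefix code not strictly contained in any prefix code. -/
def IsMaximalPrefixCode (C : Set (List A)) : Prop :=
  IsPrefixCode C ∧ ∀ D : Set (List A), IsPrefixCode D → C ⊆ D → D = C

/-- `interleave s₁ pref ⟨c₁,…,c_n⟩` is the position `⟨a₁,c₁,…,a_n,c_n⟩` in which each
`aᵢ` is the move prescribed by the strategy `s₁` (after the already-played `pref`). -/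
def interleave (s₁ : List A → A) : List A → List A → List A
  | _, [] => []
  | pref, c :: cs => s₁ pref :: c :: interleave s₁ (pref ++ [s₁ pref, c]) cs

/-!
Along a play consistent with `s₁` Player 1's moves are forced, so such a play is determined by
Player 2's moves `y`, and it begins with the interleaving of `c` iff `y` begins with `c`. Hence
`s₁` wins for `Z_{s₁}(C)` iff `C` is a barrier (every infinite sequence has a prefix in `C`), and
the sum in (1) is the Kraft sum `∑_{c ∈ C} |A|^{-|c|}`. A finite set is a maximal prefix code iff
it is a prefix code and a barrier. For a finite barrier, double count the pairs `(c, w)` with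
`c ∈ C` a prefix of a word `w` of length `N ≥ max |c|`: every `w` has at least one such `c`, and
exactly one iff `C` is a prefix code, so the Kraft sum times `|A|^N` equals `|A|^N` iff `C` is a
prefix code.
-/

theorem prefixOfPlay_iff_isPrefix_ofFn {p : List A} {x : ℕ → A} {n : ℕ} (h : p.length ≤ n) :
    PrefixOfPlay p x ↔ p <+: List.ofFn (fun i : Fin n => x i) := by
  rw [List.prefix_iff_eq_take, ← Fin.ofFn_take_eq_take_ofFn h, PrefixOfPlay, eq_comm]
  rfl

theorem prefixOfPlay_append_singleton {p : List A} {a : A} {x : ℕ → A} :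
    PrefixOfPlay (p ++ [a]) x ↔ PrefixOfPlay p x ∧ x p.length = a := by
  simp only [PrefixOfPlay, List.length_append, List.length_singleton]
  rw [List.ofFn_succ', List.concat_eq_append, List.append_singleton_inj]
  simp

theorem PrefixOfPlay.isPrefix_or_isPrefix {p q : List A} {x : ℕ → A} (hp : PrefixOfPlay p x)
    (hq : PrefixOfPlay q x) : p <+: q ∨ q <+: p :=
  List.prefix_or_prefix_of_prefix
    ((prefixOfPlay_iff_isPrefix_ofFn (le_max_left p.length q.length)).1 hp)
    ((prefixOfPlay_iff_isPrefix_ofFn (le_max_right p.length q.length)).1 hq)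

theorem exists_prefixOfPlay [Nonempty A] (p : List A) : ∃ x : ℕ → A, PrefixOfPlay p x :=
  ⟨fun i => p.getD i (Classical.arbitrary A), List.ext_getElem (by simp) fun _ _ _ => by simp⟩

def IsBarrier (C : Set (List A)) : Prop :=
  ∀ x : ℕ → A, ∃ c ∈ C, PrefixOfPlay c x

theorem IsBarrier.exists_isPrefix [Nonempty A] {C : Set (List A)} (hC : IsBarrier C) (l : List A)
    (hl : ∀ c ∈ C, c.length ≤ l.length) : ∃ c ∈ C, c <+: l := by
  obtain ⟨x, hx⟩ := exists_prefixOfPlay l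
  obtain ⟨c, hc, hcx⟩ := hC x
  rw [prefixOfPlay_iff_isPrefix_ofFn (hl c hc), hx] at hcx
  exact ⟨c, hc, hcx⟩

section Interleave

variable (s₁ : List A → A)

theorem length_interleave : ∀ pref c : List A, (interleave s₁ pref c).length = 2 * c.length
  | _, [] => rfl
  | pref, _ :: cs => by
    simp only [interleave, List.length_cons, length_interleave _ cs]
    ring

theorem interleave_injective : ∀ pref : List A, Function.Injective (interleave s₁ pref)
  | _, [], [], _ => rfl
  | _, _ :: _, _ :: _, h => by
    simp only [interleave, List.cons.injEq] at h
    obtain ⟨-, rfl, h⟩ := h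
    exact congrArg _ (interleave_injective _ h)

theorem interleave_append_singleton : ∀ (pref cs : List A) (c : A),
    interleave s₁ pref (cs ++ [c]) =
      interleave s₁ pref cs ++ [s₁ (pref ++ interleave s₁ pref cs), c]
  | _, [], _ => by simp [interleave]
  | pref, c' :: cs, c => by
    simp [interleave, interleave_append_singleton _ cs]

theorem prefixOfPlay_interleave_iff {x : ℕ → A} (hx : Consistent1 s₁ x) (c : List A) :
    PrefixOfPlay (interleave s₁ [] c) x ↔ PrefixOfPlay c (fun k => x (2 * k + 1)) := by
  induction c using List.reverseRecOn with
  | nil => simp [interleave, PrefixOfPlay]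
  | append_singleton cs a ih =>
    rw [interleave_append_singleton, List.nil_append, ← List.singleton_append,
      ← List.append_assoc, prefixOfPlay_append_singleton, prefixOfPlay_append_singleton,
      prefixOfPlay_append_singleton, ← ih, List.length_append, length_interleave]
    constructor
    · rintro ⟨⟨h, -⟩, ha⟩
      exact ⟨h, ha⟩
    · rintro ⟨h, ha⟩
      refine ⟨⟨h, ?_⟩, ha⟩
      rw [hx, ← length_interleave s₁ [], h]

def responsePlay (y : ℕ → A) (n : ℕ) : A :=
  if n % 2 = 0 then s₁ (List.ofFn fun i : Fin n => responsePlay y i) else y (n / 2)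
termination_by n
decreasing_by exact i.isLt

theorem consistent1_responsePlay (y : ℕ → A) : Consistent1 s₁ (responsePlay s₁ y) := by
  intro n
  rw [responsePlay, if_pos (by omega)]

theorem responsePlay_odd (y : ℕ → A) (k : ℕ) : responsePlay s₁ y (2 * k + 1) = y k := by
  rw [responsePlay, if_neg (by omega)]
  congr 1
  omega

theorem winning_iff_isBarrier (C : Set (List A)) :
    (∀ x : ℕ → A, Consistent1 s₁ x → ∃ p ∈ interleave s₁ [] '' C, PrefixOfPlay p x) ↔
      IsBarrier C := by
  simp only [Set.exists_mem_image]
  constructor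
  · intro hwin y
    obtain ⟨c, hc, hcx⟩ := hwin _ (consistent1_responsePlay s₁ y)
    rw [prefixOfPlay_interleave_iff s₁ (consistent1_responsePlay s₁ y)] at hcx
    simp only [responsePlay_odd] at hcx
    exact ⟨c, hc, hcx⟩
  · intro hC x hx
    obtain ⟨c, hc, hcx⟩ := hC fun k => x (2 * k + 1)
    exact ⟨c, hc, (prefixOfPlay_interleave_iff s₁ hx c).2 hcx⟩

end Interleave

theorem IsPrefixCode.isMaximalPrefixCode [Nonempty A] {C : Set (List A)} (hC : IsPrefixCode C)
    (hb : IsBarrier C) : IsMaximalPrefixCode C := by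
  refine ⟨hC, fun D hD hCD => Set.Subset.antisymm (fun d hd => ?_) hCD⟩
  obtain ⟨x, hdx⟩ := exists_prefixOfPlay d
  obtain ⟨c, hc, hcx⟩ := hb x
  rcases hcx.isPrefix_or_isPrefix hdx with h | h
  · rwa [← hD c (hCD hc) d hd h]
  · rwa [hD d hd c (hCD hc) h]

theorem IsMaximalPrefixCode.isBarrier {C : Finset (List A)}
    (hC : IsMaximalPrefixCode (C : Set (List A))) : IsBarrier (C : Set (List A)) := by
  by_contra hb
  obtain ⟨x, hx⟩ : ∃ x : ℕ → A, ∀ c ∈ C, ¬ PrefixOfPlay c x := by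
    simpa [IsBarrier] using hb
  -- a prefix of `x` longer than every codeword could be added to `C`
  set N := C.sup List.length + 1
  set d := List.ofFn fun i : Fin N => x i
  have hdN : d.length = N := List.length_ofFn
  have hlong : ∀ c ∈ C, c.length < N := fun c hc =>
    Nat.lt_succ_of_le (Finset.le_sup (f := List.length) hc)
  have hD : IsPrefixCode (insert d (C : Set (List A))) := by
    rintro p (rfl | hp) q (rfl | hq) hpq
    · rfl
    · exact absurd (hdN ▸ hpq.length_le) (not_le.2 (hlong q hq))
    · exact absurd ((prefixOfPlay_iff_isPrefix_ofFn (hdN ▸ hpq.length_le)).2 hpq) (hx p hp)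
    · exact hC.1 p hp q hq hpq
  have hdC : d ∈ C := by
    rw [← Finset.mem_coe, ← hC.2 _ hD (Set.subset_insert d _)]
    exact Set.mem_insert d _
  exact hx d hdC ((prefixOfPlay_iff_isPrefix_ofFn hdN.le).2 List.prefix_rfl)

theorem isMaximalPrefixCode_iff [Nonempty A] {C : Finset (List A)} :
    IsMaximalPrefixCode (C : Set (List A)) ↔
      IsPrefixCode (C : Set (List A)) ∧ IsBarrier (C : Set (List A)) :=
  ⟨fun h => ⟨h.1, h.isBarrier⟩, fun h => h.1.isMaximalPrefixCode h.2⟩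

section Kraft

open Finset

variable [Fintype A]

variable (A) in
def words (n : ℕ) : Finset (List A) :=
  (univ : Finset (List.Vector A n)).map ⟨List.Vector.toList, List.Vector.toList_injective⟩

theorem mem_words {n : ℕ} {l : List A} : l ∈ words A n ↔ l.length = n := by
  simp only [words, mem_map, mem_univ, true_and, Function.Embedding.coeFn_mk]
  exact ⟨fun ⟨v, hv⟩ => hv ▸ v.toList_length, fun h => ⟨⟨l, h⟩, rfl⟩⟩

theorem card_words (n : ℕ) : #(words A n) = Fintype.card A ^ n := by
  simp [words]

theorem kraftSum_mul_pow [Nonempty A] {C : Finset (List A)} {N : ℕ}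
    (hN : ∀ c ∈ C, c.length ≤ N) :
    (∑ c ∈ C, (1 / Fintype.card A : ℝ) ^ c.length) * (Fintype.card A : ℝ) ^ N =
      ∑ c ∈ C, ((Fintype.card A ^ (N - c.length) : ℕ) : ℝ) := by
  have hk : (Fintype.card A : ℝ) ≠ 0 := by exact_mod_cast Fintype.card_ne_zero
  rw [sum_mul]
  refine sum_congr rfl fun c hc => ?_
  rw [Nat.cast_pow, ← Nat.add_sub_of_le (hN c hc), pow_add, Nat.add_sub_cancel_left, one_div,
    inv_pow, inv_mul_cancel_left₀ (pow_ne_zero _ hk)]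

variable [DecidableEq A]

theorem card_filter_isPrefix_words {c : List A} {n : ℕ} (h : c.length ≤ n) :
    #{l ∈ words A n | c <+: l} = Fintype.card A ^ (n - c.length) := by
  have hext : {l ∈ words A n | c <+: l} =
      (words A (n - c.length)).map ⟨(c ++ ·), List.append_right_injective c⟩ := by
    ext l
    simp only [mem_filter, mem_map, mem_words, Function.Embedding.coeFn_mk]
    constructor
    · rintro ⟨hl, t, rfl⟩
      exact ⟨t, by simp at hl; omega, rfl⟩
    · rintro ⟨t, ht, rfl⟩
      exact ⟨by simp; omega, List.prefix_append c t⟩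
  rw [hext, card_map, card_words]

theorem sum_card_filter_isPrefix_words {C : Finset (List A)} {N : ℕ}
    (hN : ∀ c ∈ C, c.length ≤ N) :
    ∑ l ∈ words A N, #{c ∈ C | c <+: l} = ∑ c ∈ C, Fintype.card A ^ (N - c.length) := by
  calc ∑ l ∈ words A N, #{c ∈ C | c <+: l} = ∑ c ∈ C, #{l ∈ words A N | c <+: l} :=
        (sum_card_bipartiteAbove_eq_sum_card_bipartiteBelow _).symm
    _ = ∑ c ∈ C, Fintype.card A ^ (N - c.length) :=
        sum_congr rfl fun c hc => card_filter_isPrefix_words (hN c hc)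

theorem isPrefixCode_iff_card_filter_isPrefix_le_one [Nonempty A] {C : Finset (List A)} {N : ℕ}
    (hN : ∀ c ∈ C, c.length ≤ N) :
    IsPrefixCode (C : Set (List A)) ↔ ∀ l ∈ words A N, #{c ∈ C | c <+: l} ≤ 1 := by
  constructor
  · intro hC l _
    refine card_le_one.2 fun p hp q hq => ?_
    rw [mem_filter] at hp hq
    rcases List.prefix_or_prefix_of_prefix hp.2 hq.2 with h | h
    · exact hC p hp.1 q hq.1 h
    · exact (hC q hq.1 p hp.1 h).symm
  · intro h p hp q hq hpq
    set l := q ++ List.replicate (N - q.length) (Classical.arbitrary A)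
    have hl : l ∈ words A N := by
      have := hN q hq
      rw [mem_words, List.length_append, List.length_replicate]
      omega
    refine card_le_one.1 (h l hl) p ?_ q ?_ <;> rw [mem_filter]
    · exact ⟨hp, hpq.trans (List.prefix_append _ _)⟩
    · exact ⟨hq, List.prefix_append _ _⟩

theorem IsBarrier.one_le_card_filter_isPrefix [Nonempty A] {C : Finset (List A)}
    (hb : IsBarrier (C : Set (List A))) {N : ℕ} (hN : ∀ c ∈ C, c.length ≤ N) {l : List A}
    (hl : l ∈ words A N) : 1 ≤ #{c ∈ C | c <+: l} := by
  obtain ⟨c, hc, hcl⟩ := hb.exists_isPrefix l fun c hc => mem_words.1 hl ▸ hN c hc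
  exact card_pos.2 ⟨c, mem_filter.2 ⟨hc, hcl⟩⟩

theorem IsBarrier.kraftSum_eq_one_iff [Nonempty A] {C : Finset (List A)}
    (hb : IsBarrier (C : Set (List A))) :
    ∑ c ∈ C, (1 / Fintype.card A : ℝ) ^ c.length = 1 ↔ IsPrefixCode (C : Set (List A)) := by
  set N := C.sup List.length
  have hN : ∀ c ∈ C, c.length ≤ N := fun c hc => le_sup (f := List.length) hc
  have hk : (Fintype.card A : ℝ) ^ N ≠ 0 := pow_ne_zero _ (by exact_mod_cast Fintype.card_ne_zero)
  have hcount : ∑ c ∈ C, (1 / Fintype.card A : ℝ) ^ c.length = 1 ↔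
      ∑ l ∈ words A N, 1 = ∑ l ∈ words A N, #{c ∈ C | c <+: l} := by
    rw [← mul_left_inj' hk, kraftSum_mul_pow hN, one_mul, sum_card_filter_isPrefix_words hN,
      sum_const, card_words, smul_eq_mul, mul_one, eq_comm]
    norm_cast
  rw [hcount, sum_eq_sum_iff_of_le fun l hl => hb.one_le_card_filter_isPrefix hN hl,
    isPrefixCode_iff_card_filter_isPrefix_le_one hN]
  exact forall₂_congr fun l hl =>
    ⟨fun h => h.ge, fun h => le_antisymm (hb.one_le_card_filter_isPrefix hN hl) h⟩

end Kraft

/-- `C` is a maximal prefix code iff `Z_{s₁}(C)` is minimal-size and `s₁` is a winning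
strategy for Player 1 in the game with winning set determined by `Z_{s₁}(C)`. -/
theorem isMaximalPrefixCode_iff_winning [Fintype A] [Nonempty A] [DecidableEq A]
    (s₁ : List A → A) (C : Finset (List A)) :
    IsMaximalPrefixCode (↑C : Set (List A)) ↔
      (∑ p ∈ C.image (fun c => interleave s₁ [] c),
          ((1 : ℝ) / Fintype.card A) ^ (p.length / 2) = 1 ∧
       ∀ x : ℕ → A, Consistent1 s₁ x →
         ∃ p ∈ (↑(C.image fun c => interleave s₁ [] c) : Set (List A)),
           PrefixOfPlay p x) := by
  have hsum : ∑ p ∈ C.image (fun c => interleave s₁ [] c),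
      ((1 : ℝ) / Fintype.card A) ^ (p.length / 2) =
      ∑ c ∈ C, ((1 : ℝ) / Fintype.card A) ^ c.length := by
    rw [Finset.sum_image fun c _ c' _ h => interleave_injective s₁ [] h]
    simp only [length_interleave, Nat.mul_div_cancel_left _ two_pos]
  rw [hsum, Finset.coe_image, winning_iff_isBarrier, isMaximalPrefixCode_iff]
  exact ⟨fun ⟨hC, hb⟩ => ⟨hb.kraftSum_eq_one_iff.2 hC, hb⟩,
    fun ⟨hk, hb⟩ => ⟨hb.kraftSum_eq_one_iff.1 hk, hb⟩⟩
end

section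
/- Let A be a finite nonempty alphabet and let Z be a set of positions over A. Form the signed alphabet A± = A × {+1, −1}; a signed word is reduced if it contains no two consecutive letters of the form (a, ε)(a, −ε), and a signed play is an infinite sequence over A± all of whose finite prefixes are reduced. Consider the game on the tree T' of reduced signed words, where a strategy of Player 1 (resp. Player 2) assigns to every even-length (resp. odd-length) reduced signed word a signed letter whose appending keeps the word reduced, and the lifted winning set W' consists of all signed plays having a finite prefix whose projection to A (forgetting signs) belongs to Z. Then Player 1 has a winning strategy for Z in the game on the full tree over A if and only if Player 1 has a winning strategy in the game (T', W'). -/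
open scoped ENNReal

variable {A : Type*}

/-- A signed word over `A × Bool` is reduced if no two consecutive letters are of the
form `(a, ε)(a, ¬ε)`. -/
def Reduced (w : List (A × Bool)) : Prop :=
  w.Chain' fun u v => u.1 = v.1 → u.2 = v.2

/-
Signs carry no information about `Z`, so the two games differ only in bookkeeping. A strategy
on `A` lifts by playing its letter with the sign of the previous letter, which never creates a
cancellation. Conversely, a play over `A` is lifted letter by letter: the lifted strategy's move
is copied whenever it projects to the letter played, and otherwise the letter gets the sign of
its predecessor. Along a play consistent with the projected strategy, the lift is a reduced
signed play consistent with the lifted strategy, and it projects back to the original play.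
-/

theorem List.ofFn_succ_eq_append {B : Type*} (x : ℕ → B) (n : ℕ) :
    (List.ofFn fun i : Fin (n + 1) => x i) = (List.ofFn fun i : Fin n => x i) ++ [x n] := by
  rw [List.ofFn_succ_last]
  rfl

theorem prefixOfPlay_ofFn (x : ℕ → A) (n : ℕ) :
    PrefixOfPlay (List.ofFn fun i : Fin n => x i) x := by
  unfold PrefixOfPlay
  apply List.ext_getElem <;> simp

def P1WinsLifted (Z : Set (List A)) : Prop :=
  ∃ s₁ : List (A × Bool) → A × Bool,
    (∀ w : List (A × Bool), Reduced w → Even w.length → Reduced (w ++ [s₁ w])) ∧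
    ∀ y : ℕ → A × Bool,
      (∀ n : ℕ, Reduced (List.ofFn fun i : Fin n => y i)) →
      (∀ n : ℕ, y (2 * n) = s₁ (List.ofFn fun i : Fin (2 * n) => y i)) →
      ∃ n : ℕ, (List.ofFn fun i : Fin n => y i).map Prod.fst ∈ Z

def lastSign (w : List (A × Bool)) : Bool :=
  (w.getLast?.map Prod.snd).getD true

theorem Reduced.append_lastSign {w : List (A × Bool)} (hw : Reduced w) (a : A) :
    Reduced (w ++ [(a, lastSign w)]) := by
  refine List.isChain_append.2 ⟨hw, List.isChain_singleton _, ?_⟩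
  intro u hu v hv _
  simp only [List.head?_cons, Option.mem_def, Option.some.injEq] at hu hv
  simp [← hv, lastSign, hu]

theorem P1Wins.lifted {Z : Set (List A)} (hZ : P1Wins Z) : P1WinsLifted Z := by
  obtain ⟨s₁, hs₁⟩ := hZ
  refine ⟨fun w => (s₁ (w.map Prod.fst), lastSign w), fun w hw _ => hw.append_lastSign _, ?_⟩
  intro y _ hy
  have hproj : ∀ n, (List.ofFn fun i : Fin n => y i).map Prod.fst =
      List.ofFn fun i : Fin n => (y i).1 := fun n => List.map_ofFn
  obtain ⟨p, hpZ, hpx⟩ := hs₁ (fun n => (y n).1) fun n => by simp only [hy n, hproj]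
  exact ⟨p.length, by rwa [hproj, hpx]⟩

section Lift

variable (s : List (A × Bool) → A × Bool)

noncomputable def liftLetter (w : List (A × Bool)) (a : A) : A × Bool :=
  open Classical in
  if Even w.length ∧ (s w).1 = a then s w else (a, lastSign w)

noncomputable def liftPosition (p : List A) : List (A × Bool) :=
  p.foldl (fun w a => w ++ [liftLetter s w a]) []

theorem liftLetter_fst (w : List (A × Bool)) (a : A) : (liftLetter s w a).1 = a := by
  unfold liftLetter
  split_ifs with h
  exacts [h.2, rfl]

theorem liftLetter_of_even {w : List (A × Bool)} (hw : Even w.length) :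
    liftLetter s w (s w).1 = s w :=
  if_pos ⟨hw, rfl⟩

theorem Reduced.append_liftLetter
    (hs : ∀ w : List (A × Bool), Reduced w → Even w.length → Reduced (w ++ [s w]))
    {w : List (A × Bool)} (hw : Reduced w) (a : A) : Reduced (w ++ [liftLetter s w a]) := by
  unfold liftLetter
  split_ifs with h
  exacts [hs w hw h.1, hw.append_lastSign a]

theorem liftPosition_append_singleton (p : List A) (a : A) :
    liftPosition s (p ++ [a]) = liftPosition s p ++ [liftLetter s (liftPosition s p) a] := by
  simp [liftPosition, List.foldl_append]

theorem length_liftPosition (p : List A) : (liftPosition s p).length = p.length := by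
  induction p using List.reverseRecOn with
  | nil => rfl
  | append_singleton p a ih => simp [liftPosition_append_singleton, ih]

theorem map_fst_liftPosition (p : List A) : (liftPosition s p).map Prod.fst = p := by
  induction p using List.reverseRecOn with
  | nil => rfl
  | append_singleton p a ih => simp [liftPosition_append_singleton, ih, liftLetter_fst]

theorem reduced_liftPosition
    (hs : ∀ w : List (A × Bool), Reduced w → Even w.length → Reduced (w ++ [s w]))
    (p : List A) : Reduced (liftPosition s p) := by
  induction p using List.reverseRecOn with
  | nil => exact List.isChain_nil
  | append_singleton p a ih =>
    rw [liftPosition_append_singleton]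
    exact ih.append_liftLetter s hs a

noncomputable def liftPlay (x : ℕ → A) (n : ℕ) : A × Bool :=
  liftLetter s (liftPosition s (List.ofFn fun i : Fin n => x i)) (x n)

theorem ofFn_liftPlay (x : ℕ → A) (n : ℕ) :
    (List.ofFn fun i : Fin n => liftPlay s x i) =
      liftPosition s (List.ofFn fun i : Fin n => x i) := by
  induction n with
  | zero => rfl
  | succ n ih =>
    rw [List.ofFn_succ_eq_append, ih, List.ofFn_succ_eq_append,
      liftPosition_append_singleton, liftPlay]

theorem liftPlay_two_mul {x : ℕ → A} (hx : Consistent1 (fun p => (s (liftPosition s p)).1) x)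
    (n : ℕ) : liftPlay s x (2 * n) = s (List.ofFn fun i : Fin (2 * n) => liftPlay s x i) := by
  have heven : Even (liftPosition s (List.ofFn fun i : Fin (2 * n) => x i)).length := by
    simp [length_liftPosition]
  rw [ofFn_liftPlay, liftPlay, hx n, liftLetter_of_even s heven]

end Lift

theorem P1WinsLifted.p1Wins {Z : Set (List A)} (hZ : P1WinsLifted Z) : P1Wins Z := by
  obtain ⟨s, hs, hwin⟩ := hZ
  refine ⟨fun p => (s (liftPosition s p)).1, fun x hx => ?_⟩
  have hred : ∀ n, Reduced (List.ofFn fun i : Fin n => liftPlay s x i) := fun n => by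
    rw [ofFn_liftPlay]
    exact reduced_liftPosition s hs _
  obtain ⟨n, hn⟩ := hwin (liftPlay s x) hred (liftPlay_two_mul s hx)
  rw [ofFn_liftPlay, map_fst_liftPosition] at hn
  exact ⟨_, hn, prefixOfPlay_ofFn x n⟩

theorem player1_wins_iff_wins_lifted_general (Z : Set (List A)) :
    P1Wins Z ↔
      ∃ s₁ : List (A × Bool) → A × Bool,
        (∀ w : List (A × Bool), Reduced w → Even w.length → Reduced (w ++ [s₁ w])) ∧
        ∀ y : ℕ → A × Bool,
          (∀ n : ℕ, Reduced (List.ofFn fun i : Fin n => y i)) →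
          (∀ n : ℕ, y (2 * n) = s₁ (List.ofFn fun i : Fin (2 * n) => y i)) →
          ∃ n : ℕ, (List.ofFn fun i : Fin n => y i).map Prod.fst ∈ Z :=
  ⟨P1Wins.lifted, P1WinsLifted.p1Wins⟩

/-- Player 1 has a winning strategy for `Z` on the full tree over `A` iff she has a
winning strategy in the lifted game on the tree of reduced signed words, where the
winning set consists of signed plays having a finite prefix projecting into `Z`. -/
theorem player1_wins_iff_wins_lifted [Fintype A] [Nonempty A] (Z : Set (List A)) :
    P1Wins Z ↔
      ∃ s₁ : List (A × Bool) → A × Bool,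
        (∀ w : List (A × Bool), Reduced w → Even w.length → Reduced (w ++ [s₁ w])) ∧
        ∀ y : ℕ → A × Bool,
          (∀ n : ℕ, Reduced (List.ofFn fun i : Fin n => y i)) →
          (∀ n : ℕ, y (2 * n) = s₁ (List.ofFn fun i : Fin (2 * n) => y i)) →
          ∃ n : ℕ, (List.ofFn fun i : Fin n => y i).map Prod.fst ∈ Z :=
  player1_wins_iff_wins_lifted_general Z
end

section
/- Let A be a finite nonempty alphabet, let C be a finite prefix code over A that is not a maximal prefix code, and let x = ⟨x₁, x₂, …⟩ ∈ A^ℕ. Then ∑_{c = ⟨c₁,…,c_n⟩ ∈ C} 2^{|{i ∈ {1,…,n} : c_i ≠ x_i}|} · (1/(2|A| − 1))^{len(c)} < 1. -/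
variable {A : Type*}

/-!
With `r = 1 / (2|A| - 1)`, give the letter `a` at position `n` the weight `r` if `a = xₙ` and `2r`
otherwise. At each position these weights sum to `r + 2r(|A| - 1) = 1`, and the summand for `c` is
the product of the weights of its letters, i.e. the probability of the cylinder of `c` under the
resulting product measure. The cylinders of the words of a prefix code are disjoint, so their
probabilities sum to at most `1` (a weighted Kraft inequality, proved by induction on the word
length after splitting the code by first letter). A non-maximal prefix code extends to a prefix
code with one more word, whose weight is positive, so the inequality for `C` is strict.
-/

namespace IsPrefixCode

theorem mono {C D : Set (List A)} (hD : IsPrefixCode D) (hCD : C ⊆ D) : IsPrefixCode C :=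
  fun p hp q hq => hD p (hCD hp) q (hCD hq)

theorem preimage_cons {C : Set (List A)} (hC : IsPrefixCode C) (a : A) :
    IsPrefixCode (List.cons a ⁻¹' C) :=
  fun _ hp _ hq hpq => List.cons_injective (hC _ hp _ hq (List.cons_prefix_cons.mpr ⟨rfl, hpq⟩))

theorem eq_singleton_nil {C : Set (List A)} (hC : IsPrefixCode C) (hnil : [] ∈ C) : C = {[]} :=
  Set.eq_singleton_iff_unique_mem.mpr ⟨hnil, fun c hc => (hC [] hnil c hc List.nil_prefix).symm⟩

theorem exists_insert_of_not_isMaximalPrefixCode {C : Set (List A)} (hC : IsPrefixCode C)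
    (hmax : ¬ IsMaximalPrefixCode C) : ∃ w ∉ C, IsPrefixCode (insert w C) := by
  obtain ⟨D, hD, hCD, hDC⟩ : ∃ D, IsPrefixCode D ∧ C ⊆ D ∧ D ≠ C := by
    simpa [IsMaximalPrefixCode, hC] using hmax
  obtain ⟨w, hwD, hwC⟩ := Set.exists_of_ssubset (hCD.ssubset_of_ne hDC.symm)
  exact ⟨w, hwC, hD.mono (Set.insert_subset hwD hCD)⟩

end IsPrefixCode

theorem Finset.sum_eq_sum_sum_preimage_cons [Fintype A] {M : Type*} [AddCommMonoid M]
    (C : Finset (List A)) (hnil : [] ∉ C) (g : List A → M) :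
    ∑ c ∈ C, g c =
      ∑ a, ∑ t ∈ C.preimage (List.cons a) List.cons_injective.injOn, g (a :: t) := by
  rw [Finset.sum_sigma']
  symm
  refine Finset.sum_bij (fun p _ => p.1 :: p.2) (fun p hp => ?_) (fun ⟨a, t⟩ _ ⟨b, u⟩ _ h => ?_)
    (fun c hc => ?_) (fun _ _ => rfl)
  · simpa using hp
  · obtain ⟨rfl, rfl⟩ := List.cons_eq_cons.mp h
    rfl
  · obtain _ | ⟨a, t⟩ := c
    · exact absurd hc hnil
    · exact ⟨⟨a, t⟩, by simpa using hc, rfl⟩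

noncomputable def wordWeight (f : ℕ → A → ℝ) (c : List A) : ℝ :=
  ∏ i : Fin c.length, f i (c.get i)

section WordWeight

variable {f : ℕ → A → ℝ}

@[simp]
theorem wordWeight_nil (f : ℕ → A → ℝ) : wordWeight f [] = 1 := by
  simp [wordWeight]

theorem wordWeight_cons (f : ℕ → A → ℝ) (a : A) (t : List A) :
    wordWeight f (a :: t) = f 0 a * wordWeight (fun n => f (n + 1)) t := by
  simp [wordWeight, Fin.prod_univ_succ]

theorem wordWeight_nonneg (hf : ∀ n a, 0 ≤ f n a) (c : List A) : 0 ≤ wordWeight f c :=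
  Finset.prod_nonneg fun _ _ => hf _ _

theorem wordWeight_pos (hf : ∀ n a, 0 < f n a) (c : List A) : 0 < wordWeight f c :=
  Finset.prod_pos fun _ _ => hf _ _

variable [Fintype A]

theorem IsPrefixCode.sum_wordWeight_le_one_of_length_le {n : ℕ} (hf0 : ∀ k a, 0 ≤ f k a)
    (hf1 : ∀ k, ∑ a, f k a ≤ 1) {C : Finset (List A)} (hC : IsPrefixCode (C : Set (List A)))
    (hlen : ∀ c ∈ C, c.length ≤ n) :
    ∑ c ∈ C, wordWeight f c ≤ 1 := by
  induction n generalizing f C with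
  | zero =>
    have hsub : C ⊆ {[]} := fun c hc =>
      Finset.mem_singleton.mpr (List.eq_nil_of_length_eq_zero (Nat.le_zero.mp (hlen c hc)))
    calc ∑ c ∈ C, wordWeight f c ≤ ∑ c ∈ {[]}, wordWeight f c :=
          Finset.sum_le_sum_of_subset_of_nonneg hsub fun c _ _ => wordWeight_nonneg hf0 c
      _ = 1 := by simp
  | succ n ih =>
    by_cases hnil : [] ∈ C
    · have hCnil : C = {[]} := by exact_mod_cast hC.eq_singleton_nil hnil
      simp [hCnil]
    · have hfibre (a : A) : ∑ t ∈ C.preimage (List.cons a) List.cons_injective.injOn,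
          wordWeight (fun k => f (k + 1)) t ≤ 1 := by
        refine ih (fun k => hf0 (k + 1)) (fun k => hf1 (k + 1)) ?_ fun t ht => ?_
        · simpa using hC.preimage_cons a
        · simpa using hlen _ (Finset.mem_preimage.mp ht)
      calc ∑ c ∈ C, wordWeight f c
          = ∑ a, f 0 a * ∑ t ∈ C.preimage (List.cons a) List.cons_injective.injOn,
              wordWeight (fun k => f (k + 1)) t := by
            simp only [C.sum_eq_sum_sum_preimage_cons hnil, wordWeight_cons, Finset.mul_sum]
        _ ≤ ∑ a, f 0 a :=
          Finset.sum_le_sum fun a _ => mul_le_of_le_one_right (hf0 0 a) (hfibre a)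
        _ ≤ 1 := hf1 0

theorem IsPrefixCode.sum_wordWeight_le_one (hf0 : ∀ k a, 0 ≤ f k a)
    (hf1 : ∀ k, ∑ a, f k a ≤ 1) {C : Finset (List A)} (hC : IsPrefixCode (C : Set (List A))) :
    ∑ c ∈ C, wordWeight f c ≤ 1 :=
  hC.sum_wordWeight_le_one_of_length_le hf0 hf1 fun _ hc => Finset.le_sup (f := List.length) hc

end WordWeight

section MismatchWeight

variable [Fintype A] [DecidableEq A]

noncomputable def mismatchWeight (x : ℕ → A) (n : ℕ) (a : A) : ℝ :=
  (if a ≠ x n then 2 else 1) * (1 / (2 * (Fintype.card A : ℝ) - 1))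

theorem mismatchWeight_pos (x : ℕ → A) (n : ℕ) (a : A) : 0 < mismatchWeight x n a := by
  have hcard : (1 : ℝ) ≤ Fintype.card A := by exact_mod_cast Fintype.card_pos_iff.mpr ⟨a⟩
  have hr : 0 < 1 / (2 * (Fintype.card A : ℝ) - 1) := by
    apply one_div_pos.mpr
    linarith
  unfold mismatchWeight
  split_ifs <;> positivity

theorem sum_mismatchWeight (x : ℕ → A) (n : ℕ) : ∑ a, mismatchWeight x n a = 1 := by
  -- `2|A| - 1` is odd, hence nonzero even for empty `A`
  have hodd : 2 * (Fintype.card A : ℝ) - 1 ≠ 0 := by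
    intro h
    have h2 : (2 * Fintype.card A : ℝ) = 1 := by linarith
    norm_cast at h2
    omega
  have hite (a : A) : (if a ≠ x n then (2 : ℝ) else 1) = 2 - if a = x n then 1 else 0 := by
    by_cases h : a = x n <;> norm_num [h]
  simp only [mismatchWeight, ← Finset.sum_mul, hite, Finset.sum_sub_distrib,
    Finset.sum_ite_eq', Finset.sum_const, Finset.card_univ, nsmul_eq_mul, Finset.mem_univ, if_true]
  rw [mul_comm _ (2 : ℝ)]
  exact mul_one_div_cancel hodd

theorem wordWeight_mismatchWeight (x : ℕ → A) (c : List A) :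
    wordWeight (mismatchWeight x) c =
      (2 : ℝ) ^ (Finset.univ.filter fun i : Fin c.length => c.get i ≠ x i.val).card *
        (1 / (2 * (Fintype.card A : ℝ) - 1)) ^ c.length := by
  simp only [wordWeight, mismatchWeight, Finset.prod_mul_distrib, Finset.prod_ite,
    Finset.prod_const, one_pow, mul_one, Finset.card_univ, Fintype.card_fin]

end MismatchWeight

theorem prefixCode_not_maximal_weighted_sum_lt_one_general [Fintype A] [DecidableEq A]
    (C : Finset (List A)) (hpc : IsPrefixCode (↑C : Set (List A))) (hnotmax : ¬ IsMaximalPrefixCode (↑C : Set (List A)))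
    (x : ℕ → A) :
    ∑ c ∈ C, (2 : ℝ) ^ (Finset.univ.filter fun i : Fin c.length =>
        c.get i ≠ x i.val).card *
      (1 / (2 * (Fintype.card A : ℝ) - 1)) ^ c.length < 1 := by
  obtain ⟨w, hwC, hw⟩ := hpc.exists_insert_of_not_isMaximalPrefixCode hnotmax
  have hkraft : ∑ c ∈ insert w C, wordWeight (mismatchWeight x) c ≤ 1 :=
    IsPrefixCode.sum_wordWeight_le_one (fun k a => (mismatchWeight_pos x k a).le)
      (fun k => (sum_mismatchWeight x k).le) (by simpa using hw)
  rw [Finset.sum_insert (by simpa using hwC)] at hkraft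
  simp only [← wordWeight_mismatchWeight]
  linarith [wordWeight_pos (mismatchWeight_pos x) w]

/-- For any finite non-maximal prefix code `C` and any `x ∈ A^ℕ`,
`∑_{c ∈ C} 2^{#{i : cᵢ ≠ xᵢ}} · (1/(2|A|−1))^{len(c)} < 1`. -/
theorem prefixCode_not_maximal_weighted_sum_lt_one [Fintype A] [Nonempty A] [DecidableEq A]
    (C : Finset (List A)) (hpc : IsPrefixCode (↑C : Set (List A))) (hnotmax : ¬ IsMaximalPrefixCode (↑C : Set (List A)))
    (x : ℕ → A) :
    ∑ c ∈ C, (2 : ℝ) ^ (Finset.univ.filter fun i : Fin c.length =>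
        c.get i ≠ x i.val).card *
      (1 / (2 * (Fintype.card A : ℝ) - 1)) ^ c.length < 1 :=
  prefixCode_not_maximal_weighted_sum_lt_one_general C hpc hnotmax x
end
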